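/- Let j: ℝ → ℝ be a smooth, even, nonnegative mollifier supported in (-1,1) with ∫j = 1, and j_δ(t) = δ⁻¹ j(t/δ). Let H be a Hilbert space and u, v ∈ L^∞(0,T;H) weakly continuous in time with weak limits at 0 and T. Extend u, v constantly outside [0,T] and set u_δ = u * j_δ, v_δ = v * j_δ. Then for all t ∈ [0,T], lim_{δ→0} ∫₀ᵗ (u, v_δ) − (u_δ, v) dτ = 0. -/

import Mathlib

open MeasureTheory Filter intervalIntegral RealInnerProductSpace

/-- The constant-in-time extension of `u : ℝ → H` outside `[0,T]`. -/
noncomputable def extendT {H : Type*} (T : ℝ) (u : ℝ → H) : ℝ → H :=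
  fun t => u (max 0 (min t T))

/-- The rescaled mollifier `j_δ(t) = δ⁻¹ j(t/δ)`. -/
noncomputable def mollK (j : ℝ → ℝ) (δ t : ℝ) : ℝ := δ⁻¹ * j (t / δ)

/-- Mollification in time of the constant extension of `u`. -/
noncomputable def mollT {H : Type*} [NormedAddCommGroup H] [NormedSpace ℝ H]
    (T : ℝ) (j : ℝ → ℝ) (u : ℝ → H) (δ t : ℝ) : H :=
  ∫ s : ℝ, mollK j δ (t - s) • extendT T u s

/-!
Write `ū, v̄` for the constant extensions and `g(τ, s) = ⟪ū τ, v̄ s⟫ - ⟪ū s, v̄ τ⟫`. The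
integrand is `∫ j_δ(τ - s) g(τ, s) ds`, and `j_δ(τ - s) g(τ, s)` is antisymmetric in `(τ, s)`
because `j` is even. Hence its integral over `(0, t]²` vanishes, and only the pairs with
`τ ∈ (0, t]`, `s ∉ (0, t]`, `|τ - s| < δ` remain: `τ` lies within `δ` of an endpoint, so the whole
integral is `O(δ)`.

The Bochner integrals defining `u_δ, v_δ` need strong measurability, which comes from weak
continuity: a weakly continuous map from a separable space into a Hilbert space is strongly
measurable (Pettis).
-/

open TopologicalSpace Function

section WeakMeasurability

variable {X H : Type*} [TopologicalSpace X] [NormedAddCommGroup H] [InnerProductSpace ℝ H]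
  [CompleteSpace H] {w : X → H}

theorem mem_topologicalClosure_span_of_continuous_inner
    (hw : ∀ φ : H, Continuous fun x => ⟪w x, φ⟫) {s : Set X} (hs : Dense s) (x : X) :
    w x ∈ (Submodule.span ℝ (w '' s)).topologicalClosure := by
  rw [← Submodule.orthogonal_orthogonal_eq_closure]
  intro d hd
  have hzero : Set.EqOn (fun y => ⟪w y, d⟫) 0 s := fun y hy =>
    Submodule.inner_right_of_mem_orthogonal (Submodule.subset_span (Set.mem_image_of_mem w hy)) hd
  rw [real_inner_comm]
  exact congrFun ((hw d).ext_on hs continuous_const hzero) x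

theorem stronglyMeasurable_of_continuous_inner [SeparableSpace X] [MeasurableSpace X]
    [OpensMeasurableSpace X] (hw : ∀ φ : H, Continuous fun x => ⟪w x, φ⟫) :
    StronglyMeasurable w := by
  classical
  obtain ⟨s, hsc, hsd⟩ := exists_countable_dense X
  have : Countable s := hsc.to_subtype
  -- `w` is the pointwise limit of its projections onto the spans of finitely many samples
  let U : Finset s → Submodule ℝ H := fun F => Submodule.span ℝ (F.image fun y : s => w y)
  have hU : Monotone U := fun F G hFG => Submodule.span_mono (by gcongr)
  have hsup : ⨆ F, U F = Submodule.span ℝ (w '' s) := by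
    rw [← Submodule.span_iUnion]
    congr 1
    ext z
    simp only [Set.mem_iUnion, Finset.coe_image, Set.mem_image, Finset.mem_coe]
    constructor
    · rintro ⟨F, y, -, rfl⟩
      exact ⟨y, y.2, rfl⟩
    · rintro ⟨y, hy, rfl⟩
      exact ⟨{⟨y, hy⟩}, ⟨y, hy⟩, Finset.mem_singleton_self _, rfl⟩
  have hproj : ∀ F, StronglyMeasurable fun x => (U F).starProjection (w x) := by
    intro F
    let b := stdOrthonormalBasis ℝ (U F)
    have hsum : (fun x => (U F).starProjection (w x)) =
        fun x => ∑ i, ⟪w x, (b i : H)⟫ • (b i : H) := by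
      ext x
      simp [b.starProjection_eq_sum_rankOne, real_inner_comm]
    rw [hsum]
    exact Finset.stronglyMeasurable_fun_sum _ fun i _ => (hw _).stronglyMeasurable.smul_const _
  refine stronglyMeasurable_of_tendsto atTop hproj (tendsto_pi_nhds.mpr fun x => ?_)
  convert Submodule.starProjection_tendsto_closure_iSup U hU (w x)
  rw [eq_comm, Submodule.starProjection_eq_self_iff, hsup]
  exact mem_topologicalClosure_span_of_continuous_inner hw hsd x

end WeakMeasurability

theorem integral_integral_eq_zero_of_antisymm {α E : Type*} [MeasurableSpace α] {μ : Measure α}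
    [SFinite μ] [NormedAddCommGroup E] [NormedSpace ℝ E] {F : α → α → E}
    (hF : Integrable (uncurry F) (μ.prod μ)) (hanti : ∀ x y, F y x = -F x y) :
    ∫ x, ∫ y, F x y ∂μ ∂μ = 0 := by
  have h : ∫ x, ∫ y, F x y ∂μ ∂μ = -∫ x, ∫ y, F x y ∂μ ∂μ :=
    calc ∫ x, ∫ y, F x y ∂μ ∂μ = ∫ y, ∫ x, F x y ∂μ ∂μ := integral_integral_swap hF
      _ = ∫ y, ∫ x, -F y x ∂μ ∂μ := by congr 1 with y; congr 1 with x; exact hanti y x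
      _ = -∫ x, ∫ y, F x y ∂μ ∂μ := by simp only [MeasureTheory.integral_neg]
  rw [eq_neg_iff_add_eq_zero, ← two_smul ℝ] at h
  exact (smul_eq_zero.mp h).resolve_left two_ne_zero

theorem abs_setIntegral_Ioc_le_of_eq_zero_on_Icc {h : ℝ → ℝ} {a b δ C : ℝ} (hδ : 0 ≤ δ)
    (hC : ∀ τ, |h τ| ≤ C) (hzero : ∀ τ ∈ Set.Icc (a + δ) (b - δ), h τ = 0) :
    |∫ τ in Set.Ioc a b, h τ| ≤ 2 * C * δ := by
  have hC0 : 0 ≤ C := (abs_nonneg _).trans (hC 0)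
  have hlayer : Set.Ioc a b \ Set.Icc (a + δ) (b - δ) ⊆
      Set.Ioo a (a + δ) ∪ Set.Ioc (b - δ) b := by
    rintro τ ⟨⟨haτ, hτb⟩, hτ⟩
    simp only [Set.mem_Icc, not_and_or, not_le] at hτ
    rcases hτ with hτ | hτ
    · exact Or.inl ⟨haτ, hτ⟩
    · exact Or.inr ⟨hτ, hτb⟩
  have hvol : volume.real (Set.Ioc a b \ Set.Icc (a + δ) (b - δ)) ≤ 2 * δ := by
    calc _ ≤ volume.real (Set.Ioo a (a + δ) ∪ Set.Ioc (b - δ) b) :=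
          measureReal_mono hlayer (measure_union_lt_top measure_Ioo_lt_top measure_Ioc_lt_top).ne
      _ ≤ volume.real (Set.Ioo a (a + δ)) + volume.real (Set.Ioc (b - δ) b) :=
          measureReal_union_le _ _
      _ = 2 * δ := by
        rw [Real.volume_real_Ioo_of_le (by linarith), Real.volume_real_Ioc_of_le (by linarith)]
        ring
  rw [setIntegral_eq_of_subset_of_forall_sdiff_eq_zero measurableSet_Ioc Set.sdiff_subset
    fun τ ⟨hτ, hτ'⟩ => hzero τ (by_contra fun h => hτ' ⟨hτ, h⟩), ← Real.norm_eq_abs]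
  calc _ ≤ C * volume.real (Set.Ioc a b \ Set.Icc (a + δ) (b - δ)) :=
        norm_setIntegral_le_of_norm_le_const
          ((measure_mono Set.sdiff_subset).trans_lt measure_Ioc_lt_top) fun τ _ => hC τ
    _ ≤ 2 * C * δ := by nlinarith

structure IsMollifierKernel (k : ℝ → ℝ) (δ : ℝ) : Prop where
  continuous : Continuous k
  nonneg : ∀ x, 0 ≤ k x
  even : ∀ x, k (-x) = k x
  eq_zero_of_le_abs : ∀ x, δ ≤ |x| → k x = 0
  integral_eq_one : ∫ x, k x = 1

namespace IsMollifierKernel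

variable {k : ℝ → ℝ} {δ : ℝ}

theorem pos (hk : IsMollifierKernel k δ) : 0 < δ := by
  by_contra hδ
  have hk0 : k = 0 :=
    funext fun x => hk.eq_zero_of_le_abs x ((not_lt.mp hδ).trans (abs_nonneg x))
  simpa [hk0] using hk.integral_eq_one

theorem integrable_comp_sub (hk : IsMollifierKernel k δ) (τ : ℝ) :
    Integrable fun s => k (τ - s) := by
  refine (hk.continuous.integrable_of_hasCompactSupport ?_).comp_sub_left τ
  refine HasCompactSupport.intro (isCompact_Icc (a := -δ) (b := δ)) fun x hx => ?_
  refine hk.eq_zero_of_le_abs x (le_abs'.mpr ?_)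
  simp only [Set.mem_Icc, not_and_or, not_le] at hx
  rcases hx with hx | hx
  · exact Or.inl hx.le
  · exact Or.inr hx.le

theorem integral_comp_sub (hk : IsMollifierKernel k δ) (τ : ℝ) : ∫ s, k (τ - s) = 1 :=
  (integral_sub_left_eq_self k volume τ).trans hk.integral_eq_one

theorem integrable_comp_sub_mul (hk : IsMollifierKernel k δ) {g : ℝ → ℝ}
    (hg : AEStronglyMeasurable g) {C : ℝ} (hgC : ∀ s, |g s| ≤ C) (τ : ℝ) :
    Integrable fun s => k (τ - s) * g s :=
  (hk.integrable_comp_sub τ).mul_bdd hg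
    (ae_of_all _ fun s => (Real.norm_eq_abs _).trans_le (hgC s))

theorem integral_norm_comp_sub_mul_le (hk : IsMollifierKernel k δ) {g : ℝ → ℝ}
    (hg : AEStronglyMeasurable g) {C : ℝ} (hgC : ∀ s, |g s| ≤ C) (τ : ℝ) :
    ∫ s, ‖k (τ - s) * g s‖ ≤ C :=
  calc ∫ s, ‖k (τ - s) * g s‖ ≤ ∫ s, C * k (τ - s) := by
        refine integral_mono (hk.integrable_comp_sub_mul hg hgC τ).norm
          ((hk.integrable_comp_sub τ).const_mul C) fun s => ?_
        rw [norm_mul, Real.norm_of_nonneg (hk.nonneg _), Real.norm_eq_abs, mul_comm]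
        exact mul_le_mul_of_nonneg_right (hgC s) (hk.nonneg _)
    _ = C := by rw [MeasureTheory.integral_const_mul, hk.integral_comp_sub, mul_one]

theorem integrable_uncurry_comp_sub_mul (hk : IsMollifierKernel k δ) {g : ℝ → ℝ → ℝ}
    (hg : StronglyMeasurable (uncurry g)) {C : ℝ} (hgC : ∀ τ s, |g τ s| ≤ C) {S : Set ℝ}
    (hS : volume S ≠ ⊤) (S' : Set ℝ) :
    Integrable (uncurry fun τ s => k (τ - s) * g τ s)
      ((volume.restrict S).prod (volume.restrict S')) := by
  have hGm : StronglyMeasurable (uncurry fun τ s => k (τ - s) * g τ s) :=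
    (hk.continuous.comp (continuous_fst.sub continuous_snd)).stronglyMeasurable.mul hg
  have hgτ : ∀ τ, AEStronglyMeasurable (g τ) := fun τ =>
    (hg.comp_measurable measurable_prodMk_left).aestronglyMeasurable
  refine (integrable_prod_iff hGm.aestronglyMeasurable).mpr
    ⟨ae_of_all _ fun τ => (hk.integrable_comp_sub_mul (hgτ τ) (hgC τ) τ).restrict, ?_⟩
  refine Integrable.mono' (g := fun _ => C) (integrableOn_const hS)
    hGm.norm.integral_prod_right'.aestronglyMeasurable (ae_of_all _ fun τ => ?_)
  rw [Real.norm_of_nonneg (integral_nonneg fun _ => norm_nonneg _)]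
  exact (setIntegral_le_integral (hk.integrable_comp_sub_mul (hgτ τ) (hgC τ) τ).norm
    (ae_of_all _ fun _ => norm_nonneg _)).trans (hk.integral_norm_comp_sub_mul_le (hgτ τ) (hgC τ) τ)

theorem abs_setIntegral_Ioc_integral_mul_antisymm_le (hk : IsMollifierKernel k δ)
    {g : ℝ → ℝ → ℝ} (hg : StronglyMeasurable (uncurry g)) {C : ℝ} (hgC : ∀ τ s, |g τ s| ≤ C)
    (hanti : ∀ τ s, g s τ = -g τ s) (a b : ℝ) :
    |∫ τ in Set.Ioc a b, ∫ s, k (τ - s) * g τ s| ≤ 2 * C * δ := by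
  set G : ℝ → ℝ → ℝ := fun τ s => k (τ - s) * g τ s with hG
  have hgτ : ∀ τ, AEStronglyMeasurable (g τ) := fun τ =>
    (hg.comp_measurable measurable_prodMk_left).aestronglyMeasurable
  have hGτ : ∀ τ, Integrable (G τ) := fun τ => hk.integrable_comp_sub_mul (hgτ τ) (hgC τ) τ
  have hGprod := hk.integrable_uncurry_comp_sub_mul hg hgC (measure_Ioc_lt_top (a := a) (b := b)).ne
  have hGanti : ∀ τ s, G s τ = -G τ s := fun τ s => by
    simp only [hG, hanti τ s, ← hk.even (τ - s), neg_sub, mul_neg]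
  have hsplit : ∀ τ, ∫ s, k (τ - s) * g τ s =
      (∫ s in Set.Ioc a b, G τ s) + ∫ s in (Set.Ioc a b)ᶜ, G τ s := fun τ =>
    (integral_add_compl measurableSet_Ioc (hGτ τ)).symm
  have hinner : ∀ S', Integrable (fun τ => ∫ s in S', G τ s) (volume.restrict (Set.Ioc a b)) :=
    fun S' => (hGprod S').integral_prod_left
  simp only [hsplit]
  rw [integral_add (hinner _) (hinner _),
    integral_integral_eq_zero_of_antisymm (hGprod (Set.Ioc a b)) hGanti, zero_add]
  refine abs_setIntegral_Ioc_le_of_eq_zero_on_Icc hk.pos.le (fun τ => ?_) fun τ hτ => ?_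
  · rw [← Real.norm_eq_abs]
    exact (MeasureTheory.norm_integral_le_integral_norm _).trans <|
      (setIntegral_le_integral (hGτ τ).norm (ae_of_all _ fun _ => norm_nonneg _)).trans
        (hk.integral_norm_comp_sub_mul_le (hgτ τ) (hgC τ) τ)
  · refine setIntegral_eq_zero_of_forall_eq_zero fun s hs => ?_
    simp only [Set.mem_compl_iff, Set.mem_Ioc, not_and_or, not_lt, not_le] at hs
    show k (τ - s) * g τ s = 0
    rw [hk.eq_zero_of_le_abs _ (le_abs'.mpr ?_), zero_mul]
    rcases hs with hs | hs
    · exact Or.inr (by linarith [hτ.1])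
    · exact Or.inl (by linarith [hτ.2])

end IsMollifierKernel

theorem isMollifierKernel_mollK {j : ℝ → ℝ} (hj : Continuous j) (hj_even : ∀ t, j (-t) = j t)
    (hj_nonneg : ∀ t, 0 ≤ j t) (hj_supp : support j ⊆ Set.Ioo (-1 : ℝ) 1)
    (hj_int : ∫ t, j t = 1) {δ : ℝ} (hδ : 0 < δ) : IsMollifierKernel (mollK j δ) δ where
  continuous := continuous_const.mul (hj.comp (continuous_id.div_const δ))
  nonneg _ := mul_nonneg (inv_nonneg.mpr hδ.le) (hj_nonneg _)
  even x := by simp only [mollK, neg_div, hj_even]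
  eq_zero_of_le_abs x hx := by
    have hjx : j (x / δ) = 0 := notMem_support.mp fun h => by
      have hlt := abs_lt.mpr (hj_supp h)
      rw [abs_div, abs_of_pos hδ, div_lt_one hδ] at hlt
      linarith
    simp [mollK, hjx]
  integral_eq_one := by
    simp only [mollK]
    rw [MeasureTheory.integral_const_mul, Measure.integral_comp_div, hj_int, abs_of_pos hδ,
      smul_eq_mul, mul_one, inv_mul_cancel₀ hδ.ne']

theorem extendT_of_mem {H : Type*} {T τ : ℝ} (u : ℝ → H) (hτ : τ ∈ Set.Icc 0 T) :
    extendT T u τ = u τ := by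
  simp [extendT, min_eq_left hτ.2, max_eq_right hτ.1]

section Mollification

variable {H : Type*} [NormedAddCommGroup H] [InnerProductSpace ℝ H] [CompleteSpace H]
  {T δ : ℝ} {j : ℝ → ℝ} {u v : ℝ → H} {Mu Mv : ℝ}

theorem inner_mollT_sub_inner_mollT (hk : IsMollifierKernel (mollK j δ) δ)
    (hu : StronglyMeasurable (extendT T u)) (hv : StronglyMeasurable (extendT T v))
    (hMu : ∀ t, ‖u t‖ ≤ Mu) (hMv : ∀ t, ‖v t‖ ≤ Mv) {τ : ℝ} (hτ : τ ∈ Set.Icc 0 T) :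
    ⟪u τ, mollT T j v δ τ⟫ - ⟪mollT T j u δ τ, v τ⟫ =
      ∫ s, mollK j δ (τ - s) *
        (⟪extendT T u τ, extendT T v s⟫ - ⟪extendT T u s, extendT T v τ⟫) := by
  have hint : ∀ w : ℝ → H, StronglyMeasurable (extendT T w) → ∀ M, (∀ t, ‖w t‖ ≤ M) →
      Integrable fun s => mollK j δ (τ - s) • extendT T w s := fun w hw M hM =>
    (hk.integrable_comp_sub τ).smul_bdd M hw.aestronglyMeasurable (ae_of_all _ fun _ => hM _)
  have hui := hint u hu Mu hMu
  have hvi := hint v hv Mv hMv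
  rw [← extendT_of_mem u hτ, ← extendT_of_mem v hτ, real_inner_comm (extendT T v τ), mollT,
    mollT, ← integral_inner hvi, ← integral_inner hui,
    ← integral_sub (hvi.const_inner _) (hui.const_inner _)]
  congr 1 with s
  simp only [real_inner_smul_right, real_inner_comm (extendT T u s)]
  ring

theorem abs_intervalIntegral_inner_mollT_sub_le (hj : Continuous j)
    (hj_even : ∀ t, j (-t) = j t) (hj_nonneg : ∀ t, 0 ≤ j t)
    (hj_supp : support j ⊆ Set.Ioo (-1 : ℝ) 1) (hj_int : ∫ t, j t = 1)
    (hu : StronglyMeasurable (extendT T u)) (hv : StronglyMeasurable (extendT T v))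
    (hMu : ∀ t, ‖u t‖ ≤ Mu) (hMv : ∀ t, ‖v t‖ ≤ Mv) {t : ℝ} (ht : t ∈ Set.Icc 0 T)
    (hδ : 0 < δ) :
    |∫ τ in (0 : ℝ)..t, (⟪u τ, mollT T j v δ τ⟫ - ⟪mollT T j u δ τ, v τ⟫)| ≤
      4 * (Mu * Mv) * δ := by
  have hk := isMollifierKernel_mollK hj hj_even hj_nonneg hj_supp hj_int hδ
  have hinner : ∀ x y, |⟪extendT T u x, extendT T v y⟫| ≤ Mu * Mv := fun x y =>
    (abs_real_inner_le_norm _ _).trans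
      (mul_le_mul (hMu _) (hMv _) (norm_nonneg _) ((norm_nonneg _).trans (hMu 0)))
  have hg : StronglyMeasurable (uncurry fun τ s =>
      ⟪extendT T u τ, extendT T v s⟫ - ⟪extendT T u s, extendT T v τ⟫) :=
    ((hu.comp_measurable measurable_fst).inner (hv.comp_measurable measurable_snd)).sub
      ((hu.comp_measurable measurable_snd).inner (hv.comp_measurable measurable_fst))
  rw [intervalIntegral.integral_of_le ht.1, setIntegral_congr_fun measurableSet_Ioc fun τ hτ =>
    inner_mollT_sub_inner_mollT hk hu hv hMu hMv ⟨hτ.1.le, hτ.2.trans ht.2⟩]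
  refine (hk.abs_setIntegral_Ioc_integral_mul_antisymm_le hg (C := 2 * (Mu * Mv))
    (fun τ s => ?_) (fun τ s => ?_) 0 t).trans_eq (by ring)
  · exact (abs_sub _ _).trans (by linarith [hinner τ s, hinner s τ])
  · ring

end Mollification

theorem stmt0_general
    {H : Type*} [NormedAddCommGroup H] [InnerProductSpace ℝ H] [CompleteSpace H]
    (T : ℝ)
    (j : ℝ → ℝ)
    (hj_smooth : ContDiff ℝ (⊤ : ℕ∞) j)
    (hj_even : ∀ t, j (-t) = j t)
    (hj_nonneg : ∀ t, 0 ≤ j t)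
    (hj_supp : Function.support j ⊆ Set.Ioo (-1 : ℝ) 1)
    (hj_int : (∫ t : ℝ, j t) = 1)
    (u v : ℝ → H)
    (hu_bdd : ∃ M, ∀ t, ‖u t‖ ≤ M)
    (hv_bdd : ∃ M, ∀ t, ‖v t‖ ≤ M)
    -- weak continuity on `[0,T]` together with weak limits at the endpoints,
    -- encoded via the constant extension:
    (hu_wc : ∀ φ : H, Continuous fun t : ℝ => ⟪extendT T u t, φ⟫)
    (hv_wc : ∀ φ : H, Continuous fun t : ℝ => ⟪extendT T v t, φ⟫) :
    ∀ t ∈ Set.Icc (0 : ℝ) T,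
      Tendsto
        (fun δ : ℝ =>
          ∫ τ in (0 : ℝ)..t,
            (⟪u τ, mollT T j v δ τ⟫ - ⟪mollT T j u δ τ, v τ⟫))
        (nhdsWithin 0 (Set.Ioi 0)) (nhds 0) := by
  intro t ht
  obtain ⟨Mu, hMu⟩ := hu_bdd
  obtain ⟨Mv, hMv⟩ := hv_bdd
  have hbound : ∀ δ ∈ Set.Ioi (0 : ℝ),
      ‖∫ τ in (0 : ℝ)..t, (⟪u τ, mollT T j v δ τ⟫ - ⟪mollT T j u δ τ, v τ⟫)‖ ≤
        4 * (Mu * Mv) * δ := fun δ hδ =>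
    abs_intervalIntegral_inner_mollT_sub_le hj_smooth.continuous hj_even hj_nonneg hj_supp hj_int
      (stronglyMeasurable_of_continuous_inner hu_wc) (stronglyMeasurable_of_continuous_inner hv_wc)
      hMu hMv ht hδ
  refine squeeze_zero_norm' (eventually_nhdsWithin_of_forall hbound) ?_
  exact tendsto_nhdsWithin_of_tendsto_nhds
    ((continuous_const.mul continuous_id).tendsto' 0 0 (mul_zero _))

theorem stmt0
    {H : Type*} [NormedAddCommGroup H] [InnerProductSpace ℝ H] [CompleteSpace H]
    (T : ℝ) (hT : 0 < T)
    (j : ℝ → ℝ)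
    (hj_smooth : ContDiff ℝ (⊤ : ℕ∞) j)
    (hj_even : ∀ t, j (-t) = j t)
    (hj_nonneg : ∀ t, 0 ≤ j t)
    (hj_supp : Function.support j ⊆ Set.Ioo (-1 : ℝ) 1)
    (hj_int : (∫ t : ℝ, j t) = 1)
    (hj_mono : ∀ t : ℝ, 0 ≤ t → deriv j t ≤ 0)
    (u v : ℝ → H)
    (hu_bdd : ∃ M, ∀ t, ‖u t‖ ≤ M)
    (hv_bdd : ∃ M, ∀ t, ‖v t‖ ≤ M)
    -- weak continuity on `[0,T]` together with weak limits at the endpoints,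
    -- encoded via the constant extension:
    (hu_wc : ∀ φ : H, Continuous fun t : ℝ => ⟪extendT T u t, φ⟫)
    (hv_wc : ∀ φ : H, Continuous fun t : ℝ => ⟪extendT T v t, φ⟫) :
    ∀ t ∈ Set.Icc (0 : ℝ) T,
      Tendsto
        (fun δ : ℝ =>
          ∫ τ in (0 : ℝ)..t,
            (⟪u τ, mollT T j v δ τ⟫ - ⟪mollT T j u δ τ, v τ⟫))
        (nhdsWithin 0 (Set.Ioi 0)) (nhds 0) :=
  stmt0_general T j hj_smooth hj_even hj_nonneg hj_supp hj_int u v hu_bdd hv_bdd hu_wc hv_wc
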